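/- Let N ≥ 1 and let P_N be the path graph on {0,...,N−1}. Every eigenvector of the Laplacian L(P_N) is a scalar multiple of one of the 1D-DCT vectors v^(k), k = 0,...,N−1: if w ∈ ℝ^N is nonzero and L(P_N) w = λ • w for some λ ∈ ℝ, then there exist k ∈ {0,...,N−1} and c ∈ ℝ with w = c • v^(k). (Thus the 1D-DCT is, up to scaling of its vectors, the unique eigenbasis of L(P_N).) -/

import Mathlib

/-!
Extend a vector on `{0, …, N-1}` to `ℤ` by the reflections `x (-1) = x 0` and `x N = x (N-1)`;
then `L(P_N)` acts as the negative second difference. The sequence `m ↦ cos (θ (m + 1/2))`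
satisfies both reflections when `N θ ∈ π ℤ` and is an eigensequence of the second difference
with eigenvalue `2 - 2 cos θ`. For `θ = π k / N`, `k < N`, these eigenvalues are distinct, so the
DCT vectors form an eigenbasis, and an eigenvector has a single nonzero coordinate in it.
-/
open Matrix SimpleGraph Real

/-- The path graph on vertices `{0, 1, ..., N-1}`: `i` and `j` are adjacent iff `|i - j| = 1`. -/
def pathG (N : ℕ) : SimpleGraph (Fin N) where
  Adj i j := i.val + 1 = j.val ∨ j.val + 1 = i.val
  symm := ⟨fun _ _ h => h.symm⟩
  loopless := ⟨fun i h => by rcases h with h | h <;> omega⟩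

instance (N : ℕ) : DecidableRel (pathG N).Adj :=
  fun _ _ => inferInstanceAs (Decidable (_ ∨ _))

open Module

theorem Module.End.HasEigenvector.exists_eq_smul_of_card_eq_finrank
    {K V ι : Type*} [Field K] [AddCommGroup V] [Module K V] [FiniteDimensional K V]
    [Fintype ι] {f : End K V} {μ : ι → K} (hμ : Function.Injective μ) {v : ι → V}
    (hv : ∀ i, f.HasEigenvector (μ i) (v i)) (hcard : Fintype.card ι = finrank K V)
    {a : K} {w : V} (hw : f.HasEigenvector a w) : ∃ i, ∃ c : K, w = c • v i := by
  classical
  let b := basisOfLinearIndependentOfCardEqFinrank' v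
    (f.eigenvectors_linearIndependent' μ hμ v hv) hcard
  have hb : ⇑b = v := coe_basisOfLinearIndependentOfCardEqFinrank' ..
  have hdiag : LinearMap.toMatrix b b f = diagonal μ := by
    ext i j
    rw [LinearMap.toMatrix_apply, hb, (hv j).apply_eq_smul, ← hb, map_smul, b.repr_self,
      Finsupp.smul_apply, Finsupp.single_apply, diagonal_apply]
    split_ifs <;> simp_all
  have hcoord : ∀ i, (μ i - a) * b.repr w i = 0 := fun i => by
    have := congrFun (LinearMap.toMatrix_mulVec_repr b b f w) i
    rw [hdiag, mulVec_diagonal, hw.apply_eq_smul, map_smul, Finsupp.smul_apply, smul_eq_mul] at this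
    rw [sub_mul, this, sub_self]
  obtain ⟨i, hi⟩ : ∃ i, b.repr w i ≠ 0 := by
    by_contra! h
    exact hw.2 (b.repr.map_eq_zero_iff.1 (Finsupp.ext h))
  have hμi : μ i = a := sub_eq_zero.1 ((mul_eq_zero.1 (hcoord i)).resolve_right hi)
  refine ⟨i, b.repr w i, ?_⟩
  have : b.repr w = Finsupp.single i (b.repr w i) := by
    ext j
    rcases eq_or_ne i j with rfl | hij
    · simp
    · rw [Finsupp.single_apply, if_neg hij]
      refine (mul_eq_zero.1 (hcoord j)).resolve_left (sub_ne_zero.2 ?_)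
      rw [← hμi]; exact hμ.ne hij.symm
  rw [← hb, ← b.repr_symm_single, ← this, LinearEquiv.symm_apply_apply]

theorem lapMatrix_mulVec_apply_eq_sum_sub {V R : Type*} [Fintype V] [DecidableEq V]
    [NonAssocRing R] (G : SimpleGraph V) [DecidableRel G.Adj] (x : V → R) (v : V) :
    (G.lapMatrix R *ᵥ x) v = ∑ u ∈ G.neighborFinset v, (x v - x u) := by
  rw [lapMatrix_mulVec_apply, Finset.sum_sub_distrib, Finset.sum_const,
    card_neighborFinset_eq_degree, nsmul_eq_mul]

section PathGraph

variable {R : Type*} [NonAssocRing R] {N : ℕ}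

theorem pathG_neighborFinset (i : Fin N) :
    (pathG N).neighborFinset i =
      ({u | i.val + 1 = u.val} : Finset _) ∪ ({u | u.val + 1 = i.val} : Finset _) := by
  rw [neighborFinset_eq_filter, ← Finset.filter_or]
  rfl

theorem sum_succ_neighbor_sub (i : Fin N) (g : ℤ → R) (hN : g N = g (N - 1)) :
    ∑ u : Fin N with i.val + 1 = u.val, (g i - g u) = g i - g (i + 1) := by
  by_cases hi : i.val + 1 < N
  · rw [show ({u | i.val + 1 = u.val} : Finset (Fin N)) = {⟨i.val + 1, hi⟩} by
      ext u; simp [Fin.ext_iff, eq_comm], Finset.sum_singleton]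
    push_cast; rfl
  · rw [show ({u | i.val + 1 = u.val} : Finset (Fin N)) = ∅ by
      ext u; simp; omega, Finset.sum_empty]
    have : (i : ℤ) + 1 = N := by omega
    rw [this, hN, ← this, add_sub_cancel_right, sub_self]

theorem sum_pred_neighbor_sub (i : Fin N) (g : ℤ → R) (h0 : g (-1) = g 0) :
    ∑ u : Fin N with u.val + 1 = i.val, (g i - g u) = g i - g (i - 1) := by
  by_cases hi : i.val = 0
  · rw [show ({u | u.val + 1 = i.val} : Finset (Fin N)) = ∅ by
      ext u; simp; omega, Finset.sum_empty]
    simp [hi, h0]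
  · rw [show ({u | u.val + 1 = i.val} : Finset (Fin N)) = {⟨i.val - 1, by omega⟩} by
      ext u; simp [Fin.ext_iff]; omega, Finset.sum_singleton]
    push_cast [Nat.one_le_iff_ne_zero.2 hi]; rfl

theorem pathG_lapMatrix_mulVec_apply (g : ℤ → R) (h0 : g (-1) = g 0) (hN : g N = g (N - 1))
    (i : Fin N) :
    ((pathG N).lapMatrix R *ᵥ fun j => g j) i = (g i - g (i - 1)) + (g i - g (i + 1)) := by
  rw [lapMatrix_mulVec_apply_eq_sum_sub, pathG_neighborFinset, Finset.sum_union,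
    sum_succ_neighbor_sub i g hN, sum_pred_neighbor_sub i g h0, add_comm]
  rw [Finset.disjoint_filter]; omega

end PathGraph

section DCT

variable {N : ℕ}

noncomputable def dctVec (N : ℕ) (k : Fin N) : Fin N → ℝ :=
  fun j => cos (π * k * ((j : ℝ) + 1 / 2) / N)

noncomputable def dctEigenvalue (N : ℕ) (k : Fin N) : ℝ := 2 - 2 * cos (π * k / N)

noncomputable def dctSeq (θ : ℝ) (m : ℤ) : ℝ := cos (θ * (m + 1 / 2))

theorem dctSeq_second_difference (θ : ℝ) (m : ℤ) :
    (dctSeq θ m - dctSeq θ (m - 1)) + (dctSeq θ m - dctSeq θ (m + 1)) =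
      (2 - 2 * cos θ) * dctSeq θ m := by
  simp only [dctSeq, Int.cast_sub, Int.cast_add, Int.cast_one]
  rw [show θ * (m - 1 + 1 / 2) = θ * (m + 1 / 2) - θ by ring,
    show θ * (m + 1 + 1 / 2) = θ * (m + 1 / 2) + θ by ring, cos_sub, cos_add]
  ring

theorem dctSeq_neg_one (θ : ℝ) : dctSeq θ (-1) = dctSeq θ 0 := by
  rw [dctSeq, dctSeq, ← cos_neg]
  norm_num [mul_comm]

theorem dctSeq_natCast_eq_sub_one (k : ℕ) (hN : N ≠ 0) :
    dctSeq (π * k / N) N = dctSeq (π * k / N) (N - 1) := by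
  have e₁ : π * k / N * ((N : ℤ) + 1 / 2) = π * k / N / 2 + k * π := by
    push_cast; field_simp; ring
  have e₂ : π * k / N * (((N - 1 : ℤ) : ℝ) + 1 / 2) = k * π - π * k / N / 2 := by
    push_cast; field_simp; ring
  rw [dctSeq, dctSeq, e₁, e₂, cos_add_nat_mul_pi, cos_nat_mul_pi_sub]

theorem dctVec_eq_dctSeq (k : Fin N) :
    dctVec N k = fun j : Fin N => dctSeq (π * k / N) j := by
  ext j
  simp only [dctVec, dctSeq, Int.cast_natCast]
  ring_nf

theorem pi_mul_div_mem_Ico (k : Fin N) : π * k / N ∈ Set.Ico 0 π := by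
  have hN : (0 : ℝ) < N := by exact_mod_cast k.pos
  have hk : (k : ℝ) < N := by exact_mod_cast k.isLt
  refine ⟨by positivity, ?_⟩
  rw [div_lt_iff₀ hN]
  exact mul_lt_mul_of_pos_left hk pi_pos

theorem lapMatrix_pathG_mulVec_dctVec (k : Fin N) :
    (pathG N).lapMatrix ℝ *ᵥ dctVec N k = dctEigenvalue N k • dctVec N k := by
  ext i
  rw [dctVec_eq_dctSeq, pathG_lapMatrix_mulVec_apply _ (dctSeq_neg_one _)
    (dctSeq_natCast_eq_sub_one k k.pos.ne'), dctSeq_second_difference]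
  rfl

theorem dctVec_ne_zero (k : Fin N) : dctVec N k ≠ 0 := by
  obtain ⟨hθ₀, hθπ⟩ := pi_mul_div_mem_Ico k
  rw [dctVec_eq_dctSeq]
  refine Function.ne_iff.2 ⟨⟨0, k.pos⟩, (cos_pos_of_mem_Ioo ⟨?_, ?_⟩).ne'⟩ <;>
    push_cast <;> linarith [pi_pos]

theorem dctEigenvalue_injective (N : ℕ) : Function.Injective (dctEigenvalue N) := by
  intro k l hkl
  have hN : (N : ℝ) ≠ 0 := by have := k.pos; positivity
  have hcos : cos (π * k / N) = cos (π * l / N) := by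
    simp only [dctEigenvalue] at hkl; linarith
  have := injOn_cos (Set.Ico_subset_Icc_self (pi_mul_div_mem_Ico k))
    (Set.Ico_subset_Icc_self (pi_mul_div_mem_Ico l)) hcos
  field_simp [pi_ne_zero] at this
  exact Fin.ext (by exact_mod_cast this)

end DCT

theorem pathGraph_eigenvector_eq_smul_dct_general (N : ℕ)
    (w : Fin N → ℝ) (hw : w ≠ 0) (lam : ℝ)
    (h : (pathG N).lapMatrix ℝ *ᵥ w = lam • w) :
    ∃ (k : Fin N) (c : ℝ),
      w = c • (fun j : Fin N => Real.cos (Real.pi * k * ((j : ℝ) + 1 / 2) / N)) := by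
  have hasEigenvector {μ : ℝ} {x : Fin N → ℝ} (hx : (pathG N).lapMatrix ℝ *ᵥ x = μ • x)
      (hx₀ : x ≠ 0) : Module.End.HasEigenvector (toLin' ((pathG N).lapMatrix ℝ)) μ x :=
    ⟨Module.End.mem_eigenspace_iff.2 (by rwa [toLin'_apply]), hx₀⟩
  exact (hasEigenvector h hw).exists_eq_smul_of_card_eq_finrank (dctEigenvalue_injective N)
    (fun k => hasEigenvector (lapMatrix_pathG_mulVec_dctVec k) (dctVec_ne_zero k)) (by simp)

/-- Every eigenvector of the Laplacian of the path graph `P_N` is a scalar multiple of a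
1D-DCT vector `v^(k)`: up to scaling, the 1D-DCT is the unique eigenbasis of `L(P_N)`. -/
theorem pathGraph_eigenvector_eq_smul_dct (N : ℕ) (hN : 1 ≤ N)
    (w : Fin N → ℝ) (hw : w ≠ 0) (lam : ℝ)
    (h : (pathG N).lapMatrix ℝ *ᵥ w = lam • w) :
    ∃ (k : Fin N) (c : ℝ),
      w = c • (fun j : Fin N => Real.cos (Real.pi * k * ((j : ℝ) + 1 / 2) / N)) :=
  pathGraph_eigenvector_eq_smul_dct_general N w hw lam h
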